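/- Let N_L, N_{L-1}, K_L, D_L, N'_{L-1} be positive integers and set N'_L = N_L·N_{L-1}·K_L·D_L / (N'_{L-1}K_L + N_L + 1). If this division is exact, then the total parameter count of a 1DCNN layer L with N'_L neurons (kernel size K_L, N'_{L-1} input channels) followed by a layer L+1 with N_L neurons of kernel size 1, namely N'_L·N'_{L-1}·K_L + N'_L + N_L·N'_L + N_L, equals the parameter count N_L·N_{L-1}·K_L·D_L + N_L of the 1DPNN output layer. -/

import Mathlib

theorem pnn_equivalent_output_layer_params_general (NL NLm1 KL DL N'Lm1 N'L : ℕ)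
    (hdvd : (N'Lm1 * KL + NL + 1) ∣ NL * NLm1 * KL * DL)
    (hdef : N'L = NL * NLm1 * KL * DL / (N'Lm1 * KL + NL + 1)) :
    N'L * N'Lm1 * KL + N'L + NL * N'L + NL = NL * NLm1 * KL * DL + NL := by
  -- each neuron of layer L carries N'_{L-1}·K_L input weights, one bias and N_L outgoing weights
  have hcount : N'L * N'Lm1 * KL + N'L + NL * N'L = N'L * (N'Lm1 * KL + NL + 1) := by ring
  rw [hcount, hdef, Nat.div_mul_cancel hdvd]

/-- Output-layer construction of the 1DPNN-equivalent network (Theorem 1, Eq. (14)):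
if `N'_L = N_L·N_{L-1}·K_L·D_L / (N'_{L-1}K_L + N_L + 1)` with exact division, then the
parameter count of 1DCNN layers `L` and `L+1` equals that of the 1DPNN output layer. -/
theorem pnn_equivalent_output_layer_params (NL NLm1 KL DL N'Lm1 N'L : ℕ)
    (hNL : 0 < NL) (hNLm1 : 0 < NLm1) (hKL : 0 < KL) (hDL : 0 < DL) (hN'Lm1 : 0 < N'Lm1)
    (hdvd : (N'Lm1 * KL + NL + 1) ∣ NL * NLm1 * KL * DL)
    (hdef : N'L = NL * NLm1 * KL * DL / (N'Lm1 * KL + NL + 1)) :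
    N'L * N'Lm1 * KL + N'L + NL * N'L + NL = NL * NLm1 * KL * DL + NL :=
  pnn_equivalent_output_layer_params_general NL NLm1 KL DL N'Lm1 N'L hdvd hdef
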